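/- arXiv:1511.06843 — 2 statements merged into one kernel-verified Lean document; each statement's English description precedes it below -/
import Mathlib

section
/- Consider the action of Γ = O(2)×O(2) on ℂ² given by ρ(φ,ψ)(z₁,z₂) = e^{iφ}(e^{imψ}z₁, e^{-imψ}z₂), ρ(κ)(z₁,z₂) = (z₂,z₁), ρ(κ̄)(z₁,z₂) = (conj(z₂), conj(z₁)), with m ≥ 1. Then the isotropy subgroup of the point (a,0) with a ∈ ℝ, a ≠ 0, is the group Õ(2) generated by {(φ, -φ/m) : φ ∈ S¹} and κκ̄. -/
/-!
`κ` and `κ̄` each move the first axis of `ℂ²` onto the second, so only `κκ̄` (or the identity)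
can fix `(a, 0)`. On the first axis the torus acts by `e^{i(φ + mψ)}` and `κκ̄` by complex
conjugation, which fixes the real number `a`.
-/

noncomputable section

/-- The action of `Γ = O(2) × O(2)` on `ℂ²` in the irreducible representation indexed by
`m`: the torus `(φ, ψ)` acts by `ρ(φ,ψ)(z₁,z₂) = e^{iφ}(e^{imψ}z₁, e^{-imψ}z₂)`, the
reflection `κ` (flag `a`) by `(z₁,z₂) ↦ (z₂,z₁)` and `κ̄` (flag `b`) by
`(z₁,z₂) ↦ (conj z₂, conj z₁)`. A general group element is `(φ,ψ)·κ^a·κ̄^b`. -/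
def act (m : ℤ) (φ ψ : ℝ) (a b : Bool) (z : ℂ × ℂ) : ℂ × ℂ :=
  let z₁ : ℂ × ℂ := if a then (z.2, z.1) else z
  let z₂ : ℂ × ℂ := if b then (starRingEnd ℂ z₁.2, starRingEnd ℂ z₁.1) else z₁
  (Complex.exp (φ * Complex.I) * Complex.exp ((m : ℂ) * ψ * Complex.I) * z₂.1,
   Complex.exp (φ * Complex.I) * Complex.exp (-((m : ℂ) * ψ) * Complex.I) * z₂.2)

open Complex

lemma act_ofReal_zero (m : ℤ) (φ ψ : ℝ) (x y : Bool) (a : ℝ) :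
    act m φ ψ x y ((a : ℂ), 0) =
      if x = y then (exp (((φ + m * ψ : ℝ) : ℂ) * I) * a, 0)
      else (0, exp (((φ - m * ψ : ℝ) : ℂ) * I) * a) := by
  cases x <;> cases y <;>
    simp only [act, Bool.false_eq_true, Bool.true_eq_false, if_true, if_false, map_zero,
      conj_ofReal, mul_zero] <;>
    push_cast [add_mul, sub_mul, neg_mul, exp_add, exp_sub, exp_neg, div_eq_mul_inv] <;>
    rfl

/-- `Õ(2)` is encoded by equal flags (torus elements and torus elements composed with `κκ̄`)
and `e^{i(φ + mψ)} = 1`, i.e. `ψ ≡ -φ/m`. -/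
theorem isotropy_vortex_general (m : ℤ) (a : ℝ) (ha : a ≠ 0) :
    {g : ℝ × ℝ × Bool × Bool | act m g.1 g.2.1 g.2.2.1 g.2.2.2 ((a : ℂ), 0) = ((a : ℂ), 0)} =
    {g : ℝ × ℝ × Bool × Bool | g.2.2.1 = g.2.2.2 ∧
      Complex.exp ((g.1 + (m : ℝ) * g.2.1) * Complex.I) = 1} := by
  ext ⟨φ, ψ, x, y⟩
  have ha' : (a : ℂ) ≠ 0 := ofReal_ne_zero.mpr ha
  simp only [Set.mem_ofPred_eq, act_ofReal_zero]
  split_ifs with hxy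
  · simp [Prod.ext_iff, hxy, ha']
  · simp [Prod.ext_iff, hxy, ha'.symm]

/-- The isotropy subgroup of the point `(a, 0)`, `a ∈ ℝ`, `a ≠ 0`, is the group
`Õ(2)` generated by `(φ, -φ/m)` and `κκ̄`: it consists exactly of the elements with
`a = b` (i.e. torus elements and torus elements composed with `κκ̄`) whose torus part
satisfies `e^{i(φ + mψ)} = 1` (i.e. `ψ ≡ -φ/m`). -/
theorem isotropy_vortex (m : ℤ) (hm : 1 ≤ m) (a : ℝ) (ha : a ≠ 0) :
    {g : ℝ × ℝ × Bool × Bool | act m g.1 g.2.1 g.2.2.1 g.2.2.2 ((a : ℂ), 0) = ((a : ℂ), 0)} =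
    {g : ℝ × ℝ × Bool × Bool | g.2.2.1 = g.2.2.2 ∧
      Complex.exp ((g.1 + (m : ℝ) * g.2.1) * Complex.I) = 1} :=
  isotropy_vortex_general m a ha
end
end

section
/- With the same Γ-action on ℂ² as above (m ≥ 1), the isotropy subgroup of the point (a,a) with a ∈ ℝ, a ≠ 0, is the group generated by κ, κ̄, and the element (π, π/m) (phase shift by π together with rotation by π/m); this group is isomorphic to ℤ₂ × D_{2m}. -/
noncomputable section

open Complex

/-! Both reflections κ and κ̄ fix a point `(a, a)` with `a` real, so the isotropy condition
only involves the torus part, which multiplies the two coordinates by the unit phases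
`e^{i(φ ± mψ)}`; since `a ≠ 0`, these phases must both be `1`. -/

theorem act_ofReal_diag (m : ℤ) (φ ψ : ℝ) (κ κbar : Bool) (a : ℝ) :
    act m φ ψ κ κbar ((a : ℂ), (a : ℂ)) =
      (exp ((φ + (m : ℝ) * ψ) * I) * a, exp ((φ - (m : ℝ) * ψ) * I) * a) := by
  simp only [act, ite_self, conj_ofReal, ← exp_add, ← add_mul, ← sub_eq_add_neg, ofReal_intCast]

theorem isotropy_dipole_general (m : ℤ) (a : ℝ) (ha : a ≠ 0) :
    {g : ℝ × ℝ × Bool × Bool |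
        act m g.1 g.2.1 g.2.2.1 g.2.2.2 ((a : ℂ), (a : ℂ)) = ((a : ℂ), (a : ℂ))} =
    {g : ℝ × ℝ × Bool × Bool |
        Complex.exp ((g.1 + (m : ℝ) * g.2.1) * Complex.I) = 1 ∧
        Complex.exp ((g.1 - (m : ℝ) * g.2.1) * Complex.I) = 1} := by
  ext ⟨φ, ψ, κ, κbar⟩
  have ha' : (a : ℂ) ≠ 0 := ofReal_ne_zero.mpr ha
  simp only [Set.mem_ofPred_eq, act_ofReal_diag, Prod.mk.injEq, mul_eq_right₀ ha']

/-- The isotropy subgroup of the point `(a, a)`, `a ∈ ℝ`, `a ≠ 0`, is the group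
`ℤ₂ × D̃_{2m}` generated by `κ`, `κ̄` and `(π, π/m)`: it consists exactly of the
elements (with arbitrary flags `a`, `b`) whose torus part satisfies
`e^{i(φ + mψ)} = 1` and `e^{i(φ - mψ)} = 1`. -/
theorem isotropy_dipole (m : ℤ) (hm : 1 ≤ m) (a : ℝ) (ha : a ≠ 0) :
    {g : ℝ × ℝ × Bool × Bool |
        act m g.1 g.2.1 g.2.2.1 g.2.2.2 ((a : ℂ), (a : ℂ)) = ((a : ℂ), (a : ℂ))} =
    {g : ℝ × ℝ × Bool × Bool |
        Complex.exp ((g.1 + (m : ℝ) * g.2.1) * Complex.I) = 1 ∧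
        Complex.exp ((g.1 - (m : ℝ) * g.2.1) * Complex.I) = 1} :=
  isotropy_dipole_general m a ha
end
end
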